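/- Let (H,f) be a summary DAG for a DAG G, and let X, Y, W, Z be pairwise disjoint subsets of V(H). If Y is d-connected to Z given X union W in the mutilated graph H_{X-bar} (obtained from H by removing all edges entering X), then there exists a causal DAG G' compatible with (H,f) such that f^{-1}(Y) is d-connected to f^{-1}(Z) given f^{-1}(X union W) in the mutilated graph G'_{f^{-1}(X)-bar} (completeness of do-calculus in summary causal DAGs). -/

import Mathlib

/-!
Fix a section `g` of `f` and let `G'` be the copy of `H` on the representatives `g(V(H))`.
Every edge of `G'` lies over an edge of `H`, so `G'` is compatible with `(H, f)` and acyclic.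
The section is an embedding of `H` into `G'` that pulls `f⁻¹(S)` back to `S`; hence it
commutes with mutilation and carries an active trail of `H_{X̄}` from `Y` to `Z` to an active
trail of `G'_{f⁻¹(X)‾}` from `f⁻¹(Y)` to `f⁻¹(Z)`.
-/

namespace CausalDAGSummary

variable {α : Type*}

/-- A directed graph (edge relation) is a DAG when it has no directed cycle. -/
def IsDAG (E : α → α → Prop) : Prop := ∀ a, ¬ Relation.TransGen E a a

/-- A trail in a directed graph: a sequence of vertices such that consecutive
vertices are joined by an edge (in one direction or the other), with distinct edges
used along the trail. -/
def IsTrail (E : α → α → Prop) (xs : List α) : Prop :=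
  xs.Chain' (fun a b => E a b ∨ E b a) ∧
    ((xs.zip xs.tail).map (fun p => Sym2.mk p)).Nodup

/-- The vertex at position `i` of the trail `xs` is head-to-head: both its
neighbouring edges along the trail point into it. -/
def HeadToHead (E : α → α → Prop) (xs : List α) (i : ℕ) : Prop :=
  ∃ (_ : 0 < i) (h2 : i + 1 < xs.length),
    E (xs.get ⟨i - 1, by omega⟩) (xs.get ⟨i, by omega⟩) ∧
      E (xs.get ⟨i + 1, h2⟩) (xs.get ⟨i, by omega⟩)

/-- A trail is active given `Z` if every head-to-head vertex of the trail belongs to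
`Z` or has a descendant in `Z`, and every non-head-to-head vertex of the trail does
not belong to `Z`. -/
def ActiveTrail (E : α → α → Prop) (Z : Set α) (xs : List α) : Prop :=
  IsTrail E xs ∧
    ∀ (i : ℕ) (hi : i < xs.length),
      (HeadToHead E xs i →
        ∃ d ∈ Z, Relation.ReflTransGen E (xs.get ⟨i, hi⟩) d) ∧
      (¬ HeadToHead E xs i → xs.get ⟨i, hi⟩ ∉ Z)

/-- `X` and `Y` are d-connected given `Z`: some active trail joins a vertex of `X`
to a vertex of `Y`. -/
def DConnected (E : α → α → Prop) (X Y Z : Set α) : Prop :=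
  ∃ (xs : List α) (hne : xs ≠ []),
    xs.head hne ∈ X ∧ xs.getLast hne ∈ Y ∧ ActiveTrail E Z xs

/-- `X` and `Y` are d-separated by `Z`: every trail between a vertex of `X` and a
vertex of `Y` is blocked given `Z`. -/
def DSeparated (E : α → α → Prop) (X Y Z : Set α) : Prop :=
  ¬ DConnected E X Y Z


/-- The edge relation of the mutilated graph `D_{X̄}`: all edges entering vertices
of `X` are removed. -/
def mutilateIn (E : α → α → Prop) (X : Set α) : α → α → Prop := fun a b =>
  E a b ∧ b ∉ X

open Function

section

variable {β : Type*}

/- In `IsTrail`, `Sym2.mk p` is the curried `Sym2.mk` applied to the pair `p` alone, so the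
recorded edges are the functions `q ↦ s(p, q)`. -/
theorem _root_.Sym2.mk_injective : Injective (Sym2.mk : α → α → Sym2 α) := fun a b h => by
  have := Sym2.eq_iff.1 (congrFun h a)
  tauto

theorem IsDAG.of_relHom {E : α → α → Prop} {E' : β → β → Prop} (φ : E →r E')
    (h : IsDAG E') : IsDAG E :=
  fun a hcyc => h (φ a) (hcyc.lift φ fun _ _ => φ.map_rel)

section RelEmbedding

variable {E : α → α → Prop} {E' : β → β → Prop} (e : E ↪r E')

def _root_.RelEmbedding.mutilateIn {S : Set α} {S' : Set β} (hS : e ⁻¹' S' = S) :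
    mutilateIn E S ↪r mutilateIn E' S' where
  toEmbedding := e.toEmbedding
  map_rel_iff' := and_congr e.map_rel_iff (by rw [← hS]; rfl)

theorem IsTrail.map {xs : List α} (h : IsTrail E xs) : IsTrail E' (xs.map e) := by
  obtain ⟨hchain, hnodup⟩ := h
  refine ⟨List.isChain_map _ |>.2 <|
    hchain.imp fun _ _ => Or.imp e.map_rel_iff.2 e.map_rel_iff.2, ?_⟩
  rw [← List.map_tail, List.zip_map, List.map_map]
  exact (hnodup.of_map _).map (Sym2.mk_injective.comp (e.injective.prodMap e.injective))

theorem headToHead_map_iff {xs : List α} {i : ℕ} :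
    HeadToHead E' (xs.map e) i ↔ HeadToHead E xs i := by
  simp [HeadToHead, e.map_rel_iff]

theorem ActiveTrail.map {Z : Set α} {Z' : Set β} (hZ : e ⁻¹' Z' = Z) {xs : List α}
    (h : ActiveTrail E Z xs) : ActiveTrail E' Z' (xs.map e) := by
  refine ⟨h.1.map e, fun i hi => ?_⟩
  obtain ⟨hcollider, hnoncollider⟩ := h.2 i (by simpa using hi)
  simp only [headToHead_map_iff, List.get_eq_getElem, List.getElem_map]
  refine ⟨fun hh => ?_, fun hh => ?_⟩
  · obtain ⟨d, hd, hpath⟩ := hcollider hh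
    exact ⟨e d, show d ∈ e ⁻¹' Z' from hZ ▸ hd, hpath.lift e fun _ _ => e.map_rel_iff.2⟩
  · simpa [← hZ] using hnoncollider hh

theorem DConnected.map {A B Z : Set α} {A' B' Z' : Set β} (hA : A ⊆ e ⁻¹' A')
    (hB : B ⊆ e ⁻¹' B') (hZ : e ⁻¹' Z' = Z) (h : DConnected E A B Z) :
    DConnected E' A' B' Z' := by
  obtain ⟨xs, hne, hhead, hlast, hact⟩ := h
  exact ⟨xs.map e, by simpa using hne, by simpa using hA hhead, by simpa using hB hlast,
    hact.map e hZ⟩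

end RelEmbedding

def _root_.Function.Embedding.relEmbeddingMap (g : β ↪ α) (E : β → β → Prop) :
    E ↪r Relation.Map E g g where
  toEmbedding := g
  map_rel_iff' := Relation.map_apply_apply g.injective g.injective E _ _

theorem _root_.Function.LeftInverse.rel_of_relationMap {E : β → β → Prop} {f : α → β}
    {g : β → α} (hfg : LeftInverse f g) {a b : α} (h : Relation.Map E g g a b) :
    E (f a) (f b) := by
  obtain ⟨u, v, huv, rfl, rfl⟩ := h
  rwa [hfg u, hfg v]

end

theorem doCalculus_complete_summary_general {α β : Type*}
    (EH : β → β → Prop) (hH : IsDAG EH)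
    (f : α → β) (hf : Function.Surjective f)
    (X Y W Z : Set β)
    (hconn : DConnected (mutilateIn EH X) Y Z (X ∪ W)) :
    ∃ EG' : α → α → Prop, IsDAG EG' ∧
      (∀ a b, EG' a b → f a = f b ∨ EH (f a) (f b)) ∧
      DConnected (mutilateIn EG' (f ⁻¹' X)) (f ⁻¹' Y) (f ⁻¹' Z) (f ⁻¹' (X ∪ W)) := by
  let g : β ↪ α := ⟨surjInv hf, injective_surjInv hf⟩
  have hfg : LeftInverse f g := rightInverse_surjInv hf
  have hpre : ∀ S : Set β, g ⁻¹' (f ⁻¹' S) = S := hfg.preimage_preimage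
  have hproj (a b : α) : Relation.Map EH g g a b → EH (f a) (f b) := hfg.rel_of_relationMap
  refine ⟨Relation.Map EH g g, hH.of_relHom ⟨f, hproj _ _⟩, fun a b h => Or.inr (hproj a b h), ?_⟩
  exact hconn.map ((g.relEmbeddingMap EH).mutilateIn (hpre X)) (hpre Y).ge (hpre Z).ge (hpre _)

theorem doCalculus_complete_summary {α β : Type*} [Fintype α] [Fintype β]
    (EG : α → α → Prop) (EH : β → β → Prop)
    (hG : IsDAG EG) (hH : IsDAG EH)
    (f : α → β) (hf : Function.Surjective f)
    (hsummary : ∀ a b, EG a b → f a = f b ∨ EH (f a) (f b))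
    (X Y W Z : Set β)
    (hXY : Disjoint X Y) (hXW : Disjoint X W) (hXZ : Disjoint X Z)
    (hYW : Disjoint Y W) (hYZ : Disjoint Y Z) (hWZ : Disjoint W Z)
    (hconn : DConnected (mutilateIn EH X) Y Z (X ∪ W)) :
    ∃ EG' : α → α → Prop, IsDAG EG' ∧
      (∀ a b, EG' a b → f a = f b ∨ EH (f a) (f b)) ∧
      DConnected (mutilateIn EG' (f ⁻¹' X)) (f ⁻¹' Y) (f ⁻¹' Z) (f ⁻¹' (X ∪ W)) :=
  doCalculus_complete_summary_general EH hH f hf X Y W Z hconn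

end CausalDAGSummary
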